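/- arXiv:math/0701704 — 6 statements merged into one kernel-verified Lean document; each statement's English description precedes it below -/
import Mathlib

section
/- Let C be a finite algebra, A, B ≤ C. Let A₁,…,Aₘ be representatives of all Aut(C)-orbits on copies of A in C, with orbit sizes |O(Aᵢ)|. Then [A:B]·|O(B)| = Σᵢ |O(Aᵢ)|·[Aᵢ:B:C]_orb, where [A:B] is the number of copies of A in B, |O(B)| is the size of the orbit of B under Aut(C), and [Aᵢ:B:C]_orb is the number of subalgebras in the orbit of B containing Aᵢ. -/
/-!
Both sides count the pairs `A₀ ≤ B₀` with `A₀` a copy of `A` and `B₀` in the `Aut(C)`-orbit of `B`.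
Grouped by `B₀`, every member of the orbit of `B` contains as many copies of `A` as `B` does.
Grouped by `A₀`, the copies of `A` split into the orbits of the `Aᵢ`, and the number of members of
the orbit of `B` above `A₀` depends only on the orbit of `A₀`: an automorphism of `C` preserves
inclusion, being a copy of `A`, and the orbit of `B`.
-/

/-- `B₀` is a copy of `B` in `C`: a subgroup of `C` isomorphic to `B`. -/
def IsCopy {C : Type*} [Group C] (B₀ B : Subgroup C) : Prop :=
  Nonempty (B₀ ≃* B)

/-- `B₀` lies in the orbit of `B` under the natural action of `Aut(C)` on subgroups. -/
def InOrbit {C : Type*} [Group C] (B₀ B : Subgroup C) : Prop :=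
  ∃ f : C ≃* C, Subgroup.map f.toMonoidHom B = B₀

section DoubleCounting

variable {α β ι : Type*}

def Equiv.sigmaSubtypeComm (p : α → Prop) (q : β → Prop) (r : α → β → Prop) :
    (Σ b : {b // q b}, {a // r a b ∧ p a}) ≃ Σ a : {a // p a}, {b // r a b ∧ q b} where
  toFun x := ⟨⟨x.2.1, x.2.2.2⟩, ⟨x.1.1, x.2.2.1, x.1.2⟩⟩
  invFun y := ⟨⟨y.2.1, y.2.2.2⟩, ⟨y.1.1, y.2.2.1, y.1.2⟩⟩
  left_inv _ := rfl
  right_inv _ := rfl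

noncomputable def Equiv.subtypeEquivSigmaOfExistsUnique {p : α → Prop} {q : ι → α → Prop}
    (hq : ∀ i a, q i a → p a) (h : ∀ a, p a → ∃! i, q i a) :
    {a // p a} ≃ Σ i, {a // q i a} where
  toFun a := ⟨(h a a.2).choose, a, (h a a.2).choose_spec.1⟩
  invFun x := ⟨x.2, hq x.1 x.2 x.2.2⟩
  left_inv _ := rfl
  right_inv := fun ⟨i, a, ha⟩ =>
    Sigma.subtype_ext ((h a (hq i a ha)).choose_spec.2 i ha).symm rfl

theorem Nat.card_sigma_of_forall_card_eq {γ : β → Type*} [Finite β] [∀ b, Finite (γ b)] {c : ℕ}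
    (h : ∀ b, Nat.card (γ b) = c) : Nat.card (Σ b, γ b) = Nat.card β * c := by
  have := Fintype.ofFinite β
  simp [Nat.card_sigma, h, Nat.card_eq_fintype_card]

end DoubleCounting

section Orbits

variable {C : Type*} [Group C] {A B K L : Subgroup C}

theorem IsCopy.trans (h₁ : IsCopy K L) (h₂ : IsCopy L A) : IsCopy K A :=
  ⟨h₁.some.trans h₂.some⟩

theorem isCopy_map (f : C ≃* C) (K : Subgroup C) : IsCopy (K.map f.toMonoidHom) K :=
  ⟨(f.subgroupMap K).symm⟩

theorem InOrbit.isCopy (h : InOrbit K L) : IsCopy K L := by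
  obtain ⟨f, rfl⟩ := h
  exact isCopy_map f L

theorem isCopy_map_iff (f : C ≃* C) : IsCopy (K.map f.toMonoidHom) A ↔ IsCopy K A :=
  ⟨fun h => IsCopy.trans ⟨f.subgroupMap K⟩ h, (isCopy_map f K).trans⟩

theorem InOrbit.map (f : C ≃* C) (h : InOrbit K B) : InOrbit (K.map f.toMonoidHom) B := by
  obtain ⟨g, rfl⟩ := h
  exact ⟨g.trans f, by rw [Subgroup.map_map]; rfl⟩

theorem inOrbit_map_iff (f : C ≃* C) : InOrbit (K.map f.toMonoidHom) B ↔ InOrbit K B := by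
  refine ⟨fun h => ?_, InOrbit.map f⟩
  simpa [Subgroup.map_map] using h.map f.symm

theorem card_copies_le_of_inOrbit (A : Subgroup C) (h : InOrbit K L) :
    Nat.card {A₀ : Subgroup C // A₀ ≤ K ∧ IsCopy A₀ A} =
      Nat.card {A₀ : Subgroup C // A₀ ≤ L ∧ IsCopy A₀ A} := by
  obtain ⟨f, rfl⟩ := h
  refine (Nat.card_congr <| f.mapSubgroup.toEquiv.subtypeEquiv fun A₀ => ?_).symm
  exact and_congr f.mapSubgroup.le_iff_le.symm (isCopy_map_iff f).symm

theorem card_inOrbit_ge_of_inOrbit (B : Subgroup C) (h : InOrbit K L) :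
    Nat.card {B₀ : Subgroup C // K ≤ B₀ ∧ InOrbit B₀ B} =
      Nat.card {B₀ : Subgroup C // L ≤ B₀ ∧ InOrbit B₀ B} := by
  obtain ⟨f, rfl⟩ := h
  refine (Nat.card_congr <| f.mapSubgroup.toEquiv.subtypeEquiv fun B₀ => ?_).symm
  exact and_congr f.mapSubgroup.le_iff_le.symm (inOrbit_map_iff f).symm

end Orbits

theorem stmt1 {C : Type*} [Group C] [Finite C] (A B : Subgroup C)
    (m : ℕ) (As : Fin m → Subgroup C)
    (hcopy : ∀ i, IsCopy (As i) A)
    (hpart : ∀ A₀ : Subgroup C, IsCopy A₀ A → ∃! i, InOrbit A₀ (As i)) :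
    Nat.card {A₀ : Subgroup C // A₀ ≤ B ∧ IsCopy A₀ A} *
        Nat.card {B₀ : Subgroup C // InOrbit B₀ B} =
      ∑ i : Fin m,
        Nat.card {A₀ : Subgroup C // InOrbit A₀ (As i)} *
          Nat.card {B₀ : Subgroup C // As i ≤ B₀ ∧ InOrbit B₀ B} := by
  have hq (i : Fin m) (A₀ : Subgroup C) (h : InOrbit A₀ (As i)) : IsCopy A₀ A :=
    h.isCopy.trans (hcopy i)
  calc _ = Nat.card (Σ B₀ : {B₀ : Subgroup C // InOrbit B₀ B},
          {A₀ : Subgroup C // A₀ ≤ B₀ ∧ IsCopy A₀ A}) := by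
        rw [Nat.card_sigma_of_forall_card_eq fun B₀ => card_copies_le_of_inOrbit A B₀.2, mul_comm]
    _ = Nat.card (Σ A₀ : {A₀ : Subgroup C // IsCopy A₀ A},
          {B₀ : Subgroup C // A₀ ≤ B₀ ∧ InOrbit B₀ B}) :=
        Nat.card_congr (Equiv.sigmaSubtypeComm _ _ _)
    _ = Nat.card (Σ i, Σ A₀ : {A₀ : Subgroup C // InOrbit A₀ (As i)},
          {B₀ : Subgroup C // A₀.1 ≤ B₀ ∧ InOrbit B₀ B}) :=
        Nat.card_congr <|
          (Equiv.sigmaCongrLeft' (Equiv.subtypeEquivSigmaOfExistsUnique hq hpart)).trans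
            (Equiv.sigmaAssoc fun i (A₀ : {A₀ : Subgroup C // InOrbit A₀ (As i)}) =>
              {B₀ : Subgroup C // A₀.1 ≤ B₀ ∧ InOrbit B₀ B})
    _ = _ := by
        rw [Nat.card_sigma]
        exact Finset.sum_congr rfl fun i _ =>
          Nat.card_sigma_of_forall_card_eq fun A₀ => card_inOrbit_ge_of_inOrbit B A₀.2
end

section
/- Let C be a finite algebra, A, B ≤ C, and suppose Aut(C) acts transitively on the copies of A in C. Then [A:B]·[B:C] = [A:C]·[A:B:C]_iso, where [X:Y] denotes the number of subalgebras of Y isomorphic to X, and [A:B:C]_iso the number of copies of B in C containing A. -/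
theorem Nat.card_subtype_rel_eq_card_mul_of_fiberEquiv {α β γ : Type*} (R : α → β → Prop)
    (e : ∀ a, {b // R a b} ≃ γ) :
    Nat.card {p : α × β // R p.1 p.2} = Nat.card α * Nat.card γ := by
  rw [← Nat.card_prod]
  exact Nat.card_congr ((Equiv.subtypeProdEquivSigmaSubtype R).trans
    ((Equiv.sigmaCongrRight e).trans (Equiv.sigmaEquivProd α γ)))

theorem Nat.card_mul_card_eq_card_mul_card_of_fiberEquiv {X Y M N : Type*}
    (P : X → Prop) (Q : Y → Prop) (R : X → Y → Prop)
    (eP : ∀ x, P x → {y // R x y ∧ Q y} ≃ M) (eQ : ∀ y, Q y → {x // R x y ∧ P x} ≃ N) :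
    Nat.card {x // P x} * Nat.card M = Nat.card {y // Q y} * Nat.card N := by
  have count_over_P := Nat.card_subtype_rel_eq_card_mul_of_fiberEquiv
    (fun (x : Subtype P) (y : Subtype Q) => R x y) fun x =>
      ((Equiv.subtypeSubtypeEquivSubtypeInter Q (R x.1)).trans
        (Equiv.subtypeEquivRight fun _ => and_comm)).trans (eP x.1 x.2)
  have count_over_Q := Nat.card_subtype_rel_eq_card_mul_of_fiberEquiv
    (fun (y : Subtype Q) (x : Subtype P) => R x y) fun y =>
      ((Equiv.subtypeSubtypeEquivSubtypeInter P (R · y.1)).trans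
        (Equiv.subtypeEquivRight fun _ => and_comm)).trans (eQ y.1 y.2)
  rw [← count_over_P, ← count_over_Q]
  exact Nat.card_congr ((Equiv.prodComm _ _).subtypeEquiv fun _ => Iff.rfl)

theorem IsCopy.refl {C : Type*} [Group C] (A : Subgroup C) : IsCopy A A :=
  ⟨MulEquiv.refl A⟩

theorem isCopy_congr_left {C : Type*} [Group C] {A₀ A₁ : Subgroup C} (e : A₀ ≃* A₁)
    (A : Subgroup C) : IsCopy A₀ A ↔ IsCopy A₁ A :=
  ⟨fun ⟨i⟩ => ⟨e.symm.trans i⟩, fun ⟨i⟩ => ⟨e.trans i⟩⟩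

namespace Subgroup

variable {G G' : Type*} [Group G] [Group G']

def leOrderIsoOfMulEquiv {H : Subgroup G} {K : Subgroup G'} (e : H ≃* K) :
    {A₀ : Subgroup G // A₀ ≤ H} ≃o {A₁ : Subgroup G' // A₁ ≤ K} :=
  (MapSubtype.orderIso H).symm.trans ((MulEquiv.mapSubgroup e).trans (MapSubtype.orderIso K))

noncomputable def leOrderIsoOfMulEquivApplyMulEquiv {H : Subgroup G} {K : Subgroup G'}
    (e : H ≃* K) (A₀ : {A₀ : Subgroup G // A₀ ≤ H}) :
    (leOrderIsoOfMulEquiv e A₀).1 ≃* A₀.1 :=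
  ((((A₀.1.subgroupOf H).map e.toMonoidHom).equivMapOfInjective K.subtype
      K.subtype_injective).symm.trans (e.subgroupMap (A₀.1.subgroupOf H)).symm).trans
    (subgroupOfEquivOfLe A₀.2)

variable {C : Type*} [Group C]

noncomputable def copiesLeEquivOfMulEquiv (A : Subgroup C) {H K : Subgroup C} (e : H ≃* K) :
    {A₀ : Subgroup C // A₀ ≤ H ∧ IsCopy A₀ A} ≃ {A₁ : Subgroup C // A₁ ≤ K ∧ IsCopy A₁ A} :=
  (Equiv.subtypeSubtypeEquivSubtypeInter (· ≤ H) (IsCopy · A)).symm.trans <|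
    ((leOrderIsoOfMulEquiv e).toEquiv.subtypeEquiv fun A₀ =>
      (isCopy_congr_left (leOrderIsoOfMulEquivApplyMulEquiv e A₀) A).symm).trans
    (Equiv.subtypeSubtypeEquivSubtypeInter (· ≤ K) (IsCopy · A))

def copiesGeEquivMap (B : Subgroup C) (f : C ≃* C) (A₀ : Subgroup C) :
    {B₀ : Subgroup C // A₀ ≤ B₀ ∧ IsCopy B₀ B} ≃
      {B₁ : Subgroup C // A₀.map f.toMonoidHom ≤ B₁ ∧ IsCopy B₁ B} :=
  (MulEquiv.mapSubgroup f).toEquiv.subtypeEquiv fun B₀ =>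
    and_congr (MulEquiv.mapSubgroup f).le_iff_le.symm (isCopy_congr_left (f.subgroupMap B₀) B)

end Subgroup

theorem stmt2_general {C : Type*} [Group C] (A B : Subgroup C)
    (htrans : ∀ A₀ A₁ : Subgroup C, IsCopy A₀ A → IsCopy A₁ A →
      ∃ f : C ≃* C, Subgroup.map f.toMonoidHom A₀ = A₁) :
    Nat.card {A₀ : Subgroup C // A₀ ≤ B ∧ IsCopy A₀ A} *
        Nat.card {B₀ : Subgroup C // IsCopy B₀ B} =
      Nat.card {A₀ : Subgroup C // IsCopy A₀ A} *
        Nat.card {B₀ : Subgroup C // A ≤ B₀ ∧ IsCopy B₀ B} := by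
  have fiber_over_copy_of_A (A₀ : Subgroup C) (hA₀ : IsCopy A₀ A) :
      {B₀ : Subgroup C // A₀ ≤ B₀ ∧ IsCopy B₀ B} ≃ {B₀ : Subgroup C // A ≤ B₀ ∧ IsCopy B₀ B} := by
    have hf := (htrans A₀ A hA₀ (IsCopy.refl A)).choose_spec
    exact hf ▸ Subgroup.copiesGeEquivMap B _ A₀
  have fiber_over_copy_of_B (B₀ : Subgroup C) (hB₀ : IsCopy B₀ B) :
      {A₀ : Subgroup C // A₀ ≤ B₀ ∧ IsCopy A₀ A} ≃ {A₀ : Subgroup C // A₀ ≤ B ∧ IsCopy A₀ A} :=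
    Subgroup.copiesLeEquivOfMulEquiv A hB₀.some
  rw [mul_comm]
  exact (Nat.card_mul_card_eq_card_mul_card_of_fiberEquiv (IsCopy · A) (IsCopy · B) (· ≤ ·)
    fiber_over_copy_of_A fiber_over_copy_of_B).symm

theorem stmt2 {C : Type*} [Group C] [Finite C] (A B : Subgroup C)
    (htrans : ∀ A₀ A₁ : Subgroup C, IsCopy A₀ A → IsCopy A₁ A →
      ∃ f : C ≃* C, Subgroup.map f.toMonoidHom A₀ = A₁) :
    Nat.card {A₀ : Subgroup C // A₀ ≤ B ∧ IsCopy A₀ A} *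
        Nat.card {B₀ : Subgroup C // IsCopy B₀ B} =
      Nat.card {A₀ : Subgroup C // IsCopy A₀ A} *
        Nat.card {B₀ : Subgroup C // A ≤ B₀ ∧ IsCopy B₀ B} :=
  stmt2_general A B htrans
end

section
/- In the group C = Z/2 × Z/4, there exist subgroups A and A' with A ≅ A' ≅ Z/2 such that the number of subgroups of C isomorphic to Z/4 containing A is 2, while the number of subgroups of C isomorphic to Z/4 containing A' is 0. -/
open AddSubgroup

abbrev C4 := ZMod 2 × ZMod 4

lemma isAddCyclic_zmultiples {G : Type*} [AddGroup G] (a : G) :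
    IsAddCyclic (zmultiples a) := by
  refine ⟨⟨a, mem_zmultiples a⟩, fun x => ?_⟩
  obtain ⟨x, k, hk⟩ := x
  exact ⟨k, Subtype.ext (by simpa using hk)⟩

lemma card_zm (a : C4) : Nat.card (zmultiples a) = addOrderOf a := Nat.card_zmultiples a

lemma ord01 : addOrderOf ((0, 1) : C4) = 4 := by
  rw [addOrderOf_eq_iff (by norm_num)]
  constructor
  · decide
  · decide

lemma ord11 : addOrderOf ((1, 1) : C4) = 4 := by
  rw [addOrderOf_eq_iff (by norm_num)]
  exact ⟨by decide, by decide⟩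

lemma ord02 : addOrderOf ((0, 2) : C4) = 2 := by
  rw [addOrderOf_eq_iff (by norm_num)]
  exact ⟨by decide, by decide⟩

lemma ord10 : addOrderOf ((1, 0) : C4) = 2 := by
  rw [addOrderOf_eq_iff (by norm_num)]
  exact ⟨by decide, by decide⟩

noncomputable def equivOfOrder (a : C4) {n : ℕ} [NeZero n] (h : addOrderOf a = n) :
    zmultiples a ≃+ ZMod n := by
  have : IsAddCyclic (zmultiples a) := _root_.isAddCyclic_zmultiples a
  have : IsAddCyclic (ZMod n) := inferInstance
  exact addEquivOfAddCyclicCardEq (by rw [card_zm, h, Nat.card_zmod])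

lemma zm_eq_of_mem_mem {G : Type*} [AddGroup G] {a b : G} (h1 : a ∈ zmultiples b)
    (h2 : b ∈ zmultiples a) : zmultiples a = zmultiples b :=
  le_antisymm (zmultiples_le.2 h1) (zmultiples_le.2 h2)

lemma zm03 : zmultiples ((0, 3) : C4) = zmultiples ((0, 1) : C4) :=
  zm_eq_of_mem_mem ⟨3, by decide⟩ ⟨3, by decide⟩

lemma zm13 : zmultiples ((1, 3) : C4) = zmultiples ((1, 1) : C4) :=
  zm_eq_of_mem_mem ⟨3, by decide⟩ ⟨3, by decide⟩

lemma classify (B : AddSubgroup C4) (h : Nonempty (B ≃+ ZMod 4)) :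
    B = zmultiples ((0, 1) : C4) ∨ B = zmultiples ((1, 1) : C4) := by
  obtain ⟨e⟩ := h
  set g : B := e.symm 1 with hg
  have hord : addOrderOf (g : C4) = 4 := by
    rw [AddSubgroup.addOrderOf_coe, hg, AddEquiv.addOrderOf_eq, ZMod.addOrderOf_one]
  have hle : zmultiples (g : C4) ≤ B := zmultiples_le.2 g.2
  have hcard : Nat.card B = 4 := by
    rw [Nat.card_congr e.toEquiv, Nat.card_zmod]
  have hcardg : Nat.card (zmultiples (g : C4)) = 4 := by
    rw [Nat.card_zmultiples, hord]
  have hBeq : zmultiples (g : C4) = B := by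
    have hfin : (B : Set C4).Finite := Set.toFinite _
    have hn : (B : Set C4).ncard ≤ (zmultiples (g : C4) : Set C4).ncard := by
      rw [← Nat.card_coe_set_eq, ← Nat.card_coe_set_eq]
      rw [show Nat.card ((B : Set C4)) = Nat.card B from rfl]
      rw [show Nat.card ((zmultiples (g : C4) : Set C4)) = Nat.card (zmultiples (g:C4)) from rfl]
      omega
    exact SetLike.coe_set_eq.1
      (Set.eq_of_subset_of_ncard_le ((SetLike.coe_subset_coe).2 hle) hn hfin)
  have h2g : (2 : ℕ) • (g : C4) ≠ 0 := by
    intro h0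
    have := addOrderOf_dvd_of_nsmul_eq_zero h0
    rw [hord] at this
    omega
  have hcases : (g : C4) = (0,1) ∨ (g : C4) = (0,3) ∨ (g : C4) = (1,1) ∨ (g : C4) = (1,3) := by
    have : ∀ x : C4, (2 : ℕ) • x ≠ 0 → x = (0,1) ∨ x = (0,3) ∨ x = (1,1) ∨ x = (1,3) := by decide
    exact this _ h2g
  rcases hcases with h | h | h | h
  · left; rw [← hBeq, h]
  · left; rw [← hBeq, h, zm03]
  · right; rw [← hBeq, h]
  · right; rw [← hBeq, h, zm13]

lemma not_mem_B1 : ((1, 0) : C4) ∉ zmultiples ((0, 1) : C4) := by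
  rintro ⟨n, hn⟩
  have := congrArg Prod.fst hn
  simp at this

lemma not_mem_B2 : ((1, 0) : C4) ∉ zmultiples ((1, 1) : C4) := by
  rintro ⟨n, hn⟩
  have h1 : n • ((1 : ZMod 2)) = 1 := congrArg Prod.fst hn
  have h2 : n • ((1 : ZMod 4)) = 0 := congrArg Prod.snd hn
  rw [zsmul_eq_mul, mul_one] at h1 h2
  have h4 : (4 : ℤ) ∣ n := by
    exact_mod_cast (ZMod.intCast_zmod_eq_zero_iff_dvd n 4).1 h2
  have h2' : (2 : ℤ) ∣ n := dvd_trans (by norm_num) h4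
  have : (n : ZMod 2) = 0 := (ZMod.intCast_zmod_eq_zero_iff_dvd n 2).2 h2'
  rw [h1] at this
  exact one_ne_zero this

lemma B1_ne_B2 : zmultiples ((0, 1) : C4) ≠ zmultiples ((1, 1) : C4) := by
  intro h
  have : ((1, 1) : C4) ∈ zmultiples ((0, 1) : C4) := h ▸ mem_zmultiples _
  obtain ⟨n, hn⟩ := this
  have := congrArg Prod.fst hn
  simp at this

theorem stmt3 :
    ∃ A A' : AddSubgroup (ZMod 2 × ZMod 4),
      Nonempty (A ≃+ ZMod 2) ∧ Nonempty (A' ≃+ ZMod 2) ∧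
      Nat.card {B₀ : AddSubgroup (ZMod 2 × ZMod 4) //
          A ≤ B₀ ∧ Nonempty (B₀ ≃+ ZMod 4)} = 2 ∧
      Nat.card {B₀ : AddSubgroup (ZMod 2 × ZMod 4) //
          A' ≤ B₀ ∧ Nonempty (B₀ ≃+ ZMod 4)} = 0 := by
  refine ⟨zmultiples ((0, 2) : C4), zmultiples ((1, 0) : C4),
    ⟨equivOfOrder _ ord02⟩, ⟨equivOfOrder _ ord10⟩, ?_, ?_⟩
  · have hiff : ∀ B : AddSubgroup C4,
        (zmultiples ((0, 2) : C4) ≤ B ∧ Nonempty (B ≃+ ZMod 4)) ↔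
        (B = zmultiples ((0, 1) : C4) ∨ B = zmultiples ((1, 1) : C4)) := by
      intro B
      constructor
      · rintro ⟨-, h⟩; exact classify B h
      · rintro (rfl | rfl)
        · exact ⟨zmultiples_le.2 ⟨2, by decide⟩, ⟨equivOfOrder _ ord01⟩⟩
        · exact ⟨zmultiples_le.2 ⟨2, by decide⟩, ⟨equivOfOrder _ ord11⟩⟩
    have := Nat.card_congr (Equiv.subtypeEquivRight (q := fun B =>
        B ∈ ({zmultiples ((0, 1) : C4), zmultiples ((1, 1) : C4)} : Set (AddSubgroup C4)))
        (fun B => (hiff B).trans (by simp [Set.mem_insert_iff])))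
    rw [this, Nat.card_coe_set_eq, Set.ncard_pair B1_ne_B2]
  · have : IsEmpty {B₀ : AddSubgroup C4 //
        zmultiples ((1, 0) : C4) ≤ B₀ ∧ Nonempty (B₀ ≃+ ZMod 4)} := by
      refine ⟨fun ⟨B, hle, h⟩ => ?_⟩
      have hmem : ((1, 0) : C4) ∈ B := hle (mem_zmultiples _)
      rcases classify B h with rfl | rfl
      · exact not_mem_B1 hmem
      · exact not_mem_B2 hmem
    exact Nat.card_of_isEmpty
end

section
/- Every involution x in the Paige loop over F₂ is contained in a subloop isomorphic to the symmetric group S₃; equivalently, for every involution x there exists an involution y with xy of order 3. -/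
/-- Zorn vector matrices over the field with two elements. -/
structure Zorn2 where
  a : ZMod 2
  alpha : Fin 3 → ZMod 2
  beta : Fin 3 → ZMod 2
  b : ZMod 2

namespace Zorn2

/-- Standard dot product on `F₂³`. -/
def zdot (u v : Fin 3 → ZMod 2) : ZMod 2 := u 0 * v 0 + u 1 * v 1 + u 2 * v 2

/-- Standard cross product on `F₂³`. -/
def zcross (u v : Fin 3 → ZMod 2) : Fin 3 → ZMod 2 :=
  ![u 1 * v 2 - u 2 * v 1, u 2 * v 0 - u 0 * v 2, u 0 * v 1 - u 1 * v 0]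

/-- Zorn's vector matrix multiplication. -/
instance : Mul Zorn2 :=
  ⟨fun x y =>
    { a := x.a * y.a + zdot x.alpha y.beta
      alpha := fun i => x.a * y.alpha i + x.alpha i * y.b - zcross x.beta y.beta i
      beta := fun i => x.beta i * y.a + x.b * y.beta i + zcross x.alpha y.alpha i
      b := zdot x.beta y.alpha + x.b * y.b }⟩

instance : One Zorn2 := ⟨{ a := 1, alpha := fun _ => 0, beta := fun _ => 0, b := 1 }⟩

instance : Add Zorn2 :=
  ⟨fun x y => { a := x.a + y.a, alpha := x.alpha + y.alpha,
                beta := x.beta + y.beta, b := x.b + y.b }⟩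

/-- Determinant (norm) of a Zorn vector matrix. -/
def det (x : Zorn2) : ZMod 2 := x.a * x.b - zdot x.alpha x.beta

/-- `x` has multiplicative order 2. -/
def ord2 (x : Zorn2) : Prop := x * x = 1 ∧ x ≠ 1

/-- `x` has multiplicative order 3. -/
def ord3 (x : Zorn2) : Prop := x * (x * x) = 1 ∧ x * x ≠ 1 ∧ x ≠ 1

end Zorn2

/-!
In characteristic 2 every Zorn vector matrix satisfies its quadratic law `z * z = t • z + n`,
with trace `t` and norm `n = det z`. So an involution `x` has trace 0 and norm 1, and since it is
not scalar it has a nonzero off-diagonal coordinate. Pairing that coordinate against a standard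
basis vector gives `y = 1 + v` with `v` off-diagonal and of norm 0, an involution with
`trace (x * y) = 1`. By multiplicativity of the norm `x * y` has norm 1, and an element of trace 1
and norm 1 satisfies `z * z = z + 1`, whence `z * (z * z) = 1`.
-/

namespace Zorn2

open Matrix

attribute [ext] Zorn2

def trace (x : Zorn2) : ZMod 2 := x.a + x.b

def unipotent (γ δ : Fin 3 → ZMod 2) : Zorn2 := ⟨1, γ, δ, 1⟩

lemma zdot_eq_dotProduct (u v : Fin 3 → ZMod 2) : zdot u v = u ⬝ᵥ v := by
  simp [zdot, dotProduct, Fin.sum_univ_three]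

lemma zcross_eq_crossProduct (u v : Fin 3 → ZMod 2) : zcross u v = u ⨯₃ v := rfl

@[simp] lemma one_a : (1 : Zorn2).a = 1 := rfl
@[simp] lemma one_alpha : (1 : Zorn2).alpha = 0 := rfl
@[simp] lemma one_beta : (1 : Zorn2).beta = 0 := rfl
@[simp] lemma one_b : (1 : Zorn2).b = 1 := rfl

@[simp] lemma add_a (x y : Zorn2) : (x + y).a = x.a + y.a := rfl
@[simp] lemma add_alpha (x y : Zorn2) : (x + y).alpha = x.alpha + y.alpha := rfl
@[simp] lemma add_beta (x y : Zorn2) : (x + y).beta = x.beta + y.beta := rfl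
@[simp] lemma add_b (x y : Zorn2) : (x + y).b = x.b + y.b := rfl

@[simp] lemma mul_a (x y : Zorn2) : (x * y).a = x.a * y.a + x.alpha ⬝ᵥ y.beta := by
  rw [← zdot_eq_dotProduct]; rfl

@[simp] lemma mul_b (x y : Zorn2) : (x * y).b = x.beta ⬝ᵥ y.alpha + x.b * y.b := by
  rw [← zdot_eq_dotProduct]; rfl

@[simp] lemma mul_alpha (x y : Zorn2) :
    (x * y).alpha = x.a • y.alpha + y.b • x.alpha - x.beta ⨯₃ y.beta := by
  funext i
  simp only [Pi.add_apply, Pi.sub_apply, Pi.smul_apply, smul_eq_mul]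
  rw [← zcross_eq_crossProduct, mul_comm y.b]
  rfl

@[simp] lemma mul_beta (x y : Zorn2) :
    (x * y).beta = y.a • x.beta + x.b • y.beta + x.alpha ⨯₃ y.alpha := by
  funext i
  simp only [Pi.add_apply, Pi.smul_apply, smul_eq_mul]
  rw [← zcross_eq_crossProduct, mul_comm y.a]
  rfl

lemma det_eq (x : Zorn2) : det x = x.a * x.b - x.alpha ⬝ᵥ x.beta := by
  rw [det, zdot_eq_dotProduct]

lemma det_mul (x y : Zorn2) : det (x * y) = det x * det y := by
  simp only [det_eq, mul_a, mul_b, mul_alpha, mul_beta]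
  simp only [dotProduct, Fin.sum_univ_three, crossProduct, LinearMap.mk₂_apply, Pi.add_apply,
    Pi.sub_apply, Pi.smul_apply, smul_eq_mul, Matrix.cons_val]
  ring

lemma trace_mul (x y : Zorn2) :
    trace (x * y) = x.a * y.a + x.alpha ⬝ᵥ y.beta + x.beta ⬝ᵥ y.alpha + x.b * y.b := by
  simp only [trace, mul_a, mul_b]
  ring

lemma mul_add_one (x y : Zorn2) : x * (y + 1) = x * y + x := by
  ext <;> simp <;> ring

section Involutions

variable {x : Zorn2}

lemma det_eq_one_of_mul_self_eq_one (h : x * x = 1) : det x = 1 := by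
  have hdet : det x * det x = 1 := by rw [← det_mul, h]; rfl
  exact (by decide : ∀ d : ZMod 2, d * d = 1 → d = 1) _ hdet

-- The diagonal entries give `a * a = b * b`, i.e. `(a + b) ^ 2 = 0` in characteristic 2.
lemma trace_eq_zero_of_mul_self_eq_one (h : x * x = 1) : trace x = 0 := by
  have ha := congrArg Zorn2.a h
  have hb := congrArg Zorn2.b h
  simp only [mul_a, mul_b, one_a, one_b, dotProduct_comm x.beta] at ha hb
  grind [trace]

lemma alpha_ne_zero_or_beta_ne_zero (h : ord2 x) : x.alpha ≠ 0 ∨ x.beta ≠ 0 := by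
  obtain ⟨hsq, hne⟩ := h
  by_contra! hzero
  obtain ⟨a, α, β, b⟩ := x
  obtain ⟨rfl, rfl⟩ := hzero
  have ha := congrArg Zorn2.a hsq
  have hb := congrArg Zorn2.b hsq
  simp only [mul_a, mul_b, dotProduct_zero, zero_add, add_zero, one_a, one_b, mul_eq_one,
    and_self] at ha hb
  exact hne (by rw [ha, hb]; rfl)

end Involutions

section OrderThree

variable {z : Zorn2}

-- The quadratic law `z * z - trace z • z + det z = 0`, in characteristic 2.
lemma mul_self_eq_add_one (ht : trace z = 1) (hn : det z = 1) : z * z = z + 1 := by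
  rw [trace] at ht
  rw [det_eq] at hn
  ext
  · simp only [mul_a, add_a, one_a]
    grind
  · simp [cross_self, ← add_smul, ht]
  · simp [cross_self, ← add_smul, ht]
  · simp only [mul_b, add_b, one_b]
    grind [dotProduct_comm]

lemma ord3_of_trace_eq_one_of_det_eq_one (ht : trace z = 1) (hn : det z = 1) : ord3 z := by
  have hsq := mul_self_eq_add_one ht hn
  refine ⟨?_, ?_, ?_⟩
  · rw [hsq, mul_add_one, hsq]
    ext <;> simp [CharTwo.add_self_eq_zero, add_right_comm _ (1 : ZMod 2)]
  · rw [hsq]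
    intro h
    have ha := congrArg Zorn2.a h
    have hb := congrArg Zorn2.b h
    simp only [add_a, add_b, one_a, one_b, add_eq_right] at ha hb
    simp [trace, ha, hb] at ht
  · rintro rfl
    exact absurd ht (by decide)

end OrderThree

section Unipotent

variable {γ δ : Fin 3 → ZMod 2}

lemma unipotent_mul_self (hγδ : γ ⬝ᵥ δ = 0) : unipotent γ δ * unipotent γ δ = 1 := by
  ext <;> simp [unipotent, cross_self, hγδ, dotProduct_comm δ, CharTwo.add_self_eq_zero]

lemma unipotent_eq_one_iff : unipotent γ δ = 1 ↔ γ = 0 ∧ δ = 0 := by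
  simp [unipotent, Zorn2.ext_iff]

lemma det_unipotent (hγδ : γ ⬝ᵥ δ = 0) : det (unipotent γ δ) = 1 := by
  simp [det_eq, unipotent, hγδ]

end Unipotent

lemma exists_isotropic_pair {α β : Fin 3 → ZMod 2} (h : α ≠ 0 ∨ β ≠ 0) :
    ∃ γ δ : Fin 3 → ZMod 2, γ ⬝ᵥ δ = 0 ∧ α ⬝ᵥ δ + β ⬝ᵥ γ = 1 := by
  rcases h with h | h
  · obtain ⟨i, hi⟩ := Function.ne_iff.mp h
    have hi1 : α i = 1 := Fin.eq_one_of_ne_zero _ hi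
    exact ⟨0, Pi.single i 1, by simp, by simp [hi1]⟩
  · obtain ⟨i, hi⟩ := Function.ne_iff.mp h
    have hi1 : β i = 1 := Fin.eq_one_of_ne_zero _ hi
    exact ⟨Pi.single i 1, 0, by simp, by simp [hi1]⟩

end Zorn2

open Zorn2 in
theorem stmt9_general (x : Zorn2) (hx2 : Zorn2.ord2 x) :
    ∃ y : Zorn2, Zorn2.det y = 1 ∧ Zorn2.ord2 y ∧ Zorn2.ord3 (x * y) := by
  obtain ⟨γ, δ, hγδ, hpair⟩ := exists_isotropic_pair (alpha_ne_zero_or_beta_ne_zero hx2)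
  have htr : trace (x * unipotent γ δ) = 1 := by
    have htx := trace_eq_zero_of_mul_self_eq_one hx2.1
    rw [trace] at htx
    rw [trace_mul]
    simp only [unipotent, mul_one]
    linear_combination htx + hpair
  have hne : unipotent γ δ ≠ 1 := by
    rw [Ne, unipotent_eq_one_iff]
    rintro ⟨rfl, rfl⟩
    simp at hpair
  have hdet : det (x * unipotent γ δ) = 1 := by
    rw [det_mul, det_eq_one_of_mul_self_eq_one hx2.1, det_unipotent hγδ, one_mul]
  exact ⟨unipotent γ δ, det_unipotent hγδ, ⟨unipotent_mul_self hγδ, hne⟩,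
    ord3_of_trace_eq_one_of_det_eq_one htr hdet⟩

open Zorn2 in
theorem stmt9 (x : Zorn2) (hdx : Zorn2.det x = 1) (hx2 : Zorn2.ord2 x) :
    ∃ y : Zorn2, Zorn2.det y = 1 ∧ Zorn2.ord2 y ∧ Zorn2.ord3 (x * y) :=
  stmt9_general x hx2
end

section
/- Let x and y be elements of order 3 in the Paige loop over F₂ with y ∉ ⟨x⟩. Then the subloop ⟨x, y⟩ contains an involution; specifically, writing x = [[1,α],[β,0]] (up to replacing x by x⁻¹) and y = [[1,γ],[δ,0]], exactly one of the two elements xy, x²y has order 2. -/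
instance : DecidableEq Zorn2 := fun x y =>
  decidable_of_iff (x.a = y.a ∧ x.alpha = y.alpha ∧ x.beta = y.beta ∧ x.b = y.b)
    (by cases x; cases y; simp)

instance (x : Zorn2) : Decidable (Zorn2.ord2 x) :=
  decidable_of_iff (x * x = 1 ∧ x ≠ 1) Iff.rfl

instance (x : Zorn2) : Decidable (Zorn2.ord3 x) :=
  decidable_of_iff (x * (x * x) = 1 ∧ x * x ≠ 1 ∧ x ≠ 1) Iff.rfl

instance (p q : Prop) [Decidable p] [Decidable q] : Decidable (Xor' p q) :=
  decidable_of_iff ((p ∧ ¬q) ∨ (q ∧ ¬p)) Iff.rfl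

set_option synthInstance.maxSize 2000 in
set_option maxHeartbeats 4000000 in
open Zorn2 in
theorem aux11 : ∀ al be ga de : Fin 3 → ZMod 2,
    Zorn2.det ⟨1, al, be, 0⟩ = 1 → Zorn2.det ⟨1, ga, de, 0⟩ = 1 →
    Zorn2.ord3 ⟨1, al, be, 0⟩ → Zorn2.ord3 ⟨1, ga, de, 0⟩ →
    (⟨1, ga, de, 0⟩ : Zorn2) ≠ 1 → (⟨1, ga, de, 0⟩ : Zorn2) ≠ ⟨1, al, be, 0⟩ →
    (⟨1, ga, de, 0⟩ : Zorn2) ≠ (⟨1, al, be, 0⟩ : Zorn2) * ⟨1, al, be, 0⟩ →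
    Xor' (Zorn2.ord2 ((⟨1, al, be, 0⟩ : Zorn2) * ⟨1, ga, de, 0⟩))
      (Zorn2.ord2 (((⟨1, al, be, 0⟩ : Zorn2) * ⟨1, al, be, 0⟩) * ⟨1, ga, de, 0⟩)) := by
  decide

open Zorn2 in
theorem stmt11 (x y : Zorn2)
    (hdx : Zorn2.det x = 1) (hdy : Zorn2.det y = 1)
    (hx3 : Zorn2.ord3 x) (hy3 : Zorn2.ord3 y)
    (hxa : x.a = 1) (hxb : x.b = 0) (hya : y.a = 1) (hyb : y.b = 0)
    (h0 : y ≠ 1) (h1 : y ≠ x) (h2 : y ≠ x * x) :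
    Xor' (Zorn2.ord2 (x * y)) (Zorn2.ord2 ((x * x) * y)) := by
  obtain ⟨xa, al, be, xb⟩ := x
  obtain ⟨ya, ga, de, yb⟩ := y
  simp only at hxa hxb hya hyb
  subst hxa hxb hya hyb
  exact aux11 al be ga de hdx hdy hx3 hy3 h0 h1 h2
end

section
/- Let G be a finite group of order n and M(G,2) = G × Z/2 the Chein double with multiplication (g,i)·(h,j) = ((g^{(−1)^j} h^{(−1)^{i+j}})^{(−1)^j}, i+j). Then M(G,2) is a Moufang loop, every element of the coset G × {1} has order 2, and M(G,2) is nonassociative if and only if G is nonabelian. -/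
/-!
Both loop axioms hold because `cexp j` is an involution of `G`, so every equation
`a · z = b` or `z · a = b` can be solved explicitly and uniquely. The Moufang identity, and
associativity when `G` is abelian, reduce after splitting on the three `ZMod 2` components to
identities in `G`. Conversely, associativity of `(1,1) · (g⁻¹,0) · (h⁻¹,0)` reads `g h = h g`.
-/

/-- `g^{(-1)^j}` for `j : ZMod 2`. -/
def cexp {G : Type*} [Group G] (j : ZMod 2) (g : G) : G := if j = 0 then g else g⁻¹

/-- Multiplication of the Chein double `M(G,2)` on `G × ZMod 2`:
`(g,i)·(h,j) = ((g^{(−1)^j} h^{(−1)^{i+j}})^{(−1)^j}, i+j)`. -/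
def cheinMul {G : Type*} [Group G] (p q : G × ZMod 2) : G × ZMod 2 :=
  (cexp q.2 (cexp q.2 p.1 * cexp (p.2 + q.2) q.1), p.2 + q.2)

lemma ZMod.eq_zero_or_eq_one (j : ZMod 2) : j = 0 ∨ j = 1 := by
  revert j; decide

namespace Chein

variable {G : Type*} [Group G]

@[simp] lemma cexp_zero (g : G) : cexp 0 g = g := rfl

@[simp] lemma cexp_one (g : G) : cexp 1 g = g⁻¹ := rfl

@[simp] lemma cexp_cexp (j : ZMod 2) (g : G) : cexp j (cexp j g) = g := by
  rcases j.eq_zero_or_eq_one with rfl | rfl <;> simp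

@[simp] lemma cexp_one_right (j : ZMod 2) : cexp j (1 : G) = 1 := by
  rcases j.eq_zero_or_eq_one with rfl | rfl <;> simp

def cheinLdiv (a b : G × ZMod 2) : G × ZMod 2 :=
  (cexp b.2 ((cexp (b.2 - a.2) a.1)⁻¹ * cexp (b.2 - a.2) b.1), b.2 - a.2)

def cheinRdiv (b a : G × ZMod 2) : G × ZMod 2 :=
  (cexp a.2 (cexp a.2 b.1 * (cexp b.2 a.1)⁻¹), b.2 - a.2)

lemma cheinMul_left_bijective (a : G × ZMod 2) : Function.Bijective (cheinMul a) :=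
  Function.bijective_iff_has_inverse.2
    ⟨cheinLdiv a, fun z => by simp [cheinMul, cheinLdiv],
      fun b => by simp [cheinMul, cheinLdiv]⟩

lemma cheinMul_right_bijective (a : G × ZMod 2) :
    Function.Bijective (fun z => cheinMul z a) :=
  Function.bijective_iff_has_inverse.2
    ⟨(cheinRdiv · a), fun z => by simp [cheinMul, cheinRdiv],
      fun b => by simp [cheinMul, cheinRdiv]⟩

@[simp] lemma one_cheinMul (p : G × ZMod 2) : cheinMul (1, 0) p = p := by
  simp [cheinMul]

@[simp] lemma cheinMul_one (p : G × ZMod 2) : cheinMul p (1, 0) = p := by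
  simp [cheinMul]

lemma cheinMul_self_of_snd_eq_one {p : G × ZMod 2} (hp : p.2 = 1) : cheinMul p p = (1, 0) := by
  obtain ⟨g, rfl⟩ : ∃ g, p = (g, 1) := ⟨p.1, Prod.ext rfl hp⟩
  simp [cheinMul, CharTwo.add_self_eq_zero]

lemma cheinMul_moufang (x y z : G × ZMod 2) :
    cheinMul (cheinMul (cheinMul x y) x) z = cheinMul x (cheinMul y (cheinMul x z)) := by
  obtain ⟨x, i⟩ := x; obtain ⟨y, j⟩ := y; obtain ⟨z, k⟩ := z
  rcases i.eq_zero_or_eq_one with rfl | rfl <;>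
  rcases j.eq_zero_or_eq_one with rfl | rfl <;>
  rcases k.eq_zero_or_eq_one with rfl | rfl <;>
  simp only [cheinMul, zero_add, add_zero, CharTwo.add_self_eq_zero, cexp_zero, cexp_one,
    Prod.mk.injEq, and_true] <;> group

lemma cheinMul_assoc {G : Type*} [CommGroup G] (x y z : G × ZMod 2) :
    cheinMul (cheinMul x y) z = cheinMul x (cheinMul y z) := by
  obtain ⟨x, i⟩ := x; obtain ⟨y, j⟩ := y; obtain ⟨z, k⟩ := z
  rcases i.eq_zero_or_eq_one with rfl | rfl <;>
  rcases j.eq_zero_or_eq_one with rfl | rfl <;>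
  rcases k.eq_zero_or_eq_one with rfl | rfl <;>
  simp only [cheinMul, zero_add, add_zero, CharTwo.add_self_eq_zero, cexp_zero, cexp_one,
    Prod.mk.injEq, and_true] <;> (try simp only [mul_inv, inv_inv]) <;> ac_rfl

lemma mul_comm_of_cheinMul_assoc
    (h : ∀ x y z : G × ZMod 2, cheinMul (cheinMul x y) z = cheinMul x (cheinMul y z)) (g k : G) :
    g * k = k * g := by
  have := congrArg Prod.fst (h (1, 1) (g⁻¹, 0) (k⁻¹, 0))
  simpa [cheinMul] using this

lemma cheinMul_assoc_iff :
    (∀ x y z : G × ZMod 2, cheinMul (cheinMul x y) z = cheinMul x (cheinMul y z)) ↔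
      ∀ g h : G, g * h = h * g := by
  refine ⟨mul_comm_of_cheinMul_assoc, fun hG => ?_⟩
  let _ : CommGroup G := { ‹Group G› with mul_comm := hG }
  exact cheinMul_assoc

end Chein

open Chein in
theorem stmt17_general {G : Type*} [Group G] :
    ((∀ a b : G × ZMod 2, ∃! z, cheinMul a z = b) ∧
      (∀ a b : G × ZMod 2, ∃! z, cheinMul z a = b) ∧
      (∀ p : G × ZMod 2, cheinMul (1, 0) p = p ∧ cheinMul p (1, 0) = p) ∧
      (∀ x y z : G × ZMod 2,
        cheinMul (cheinMul (cheinMul x y) x) z =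
          cheinMul x (cheinMul y (cheinMul x z)))) ∧
    (∀ p : G × ZMod 2, p.2 = 1 → cheinMul p p = (1, 0) ∧ p ≠ (1, 0)) ∧
    ((¬ ∀ x y z : G × ZMod 2,
        cheinMul (cheinMul x y) z = cheinMul x (cheinMul y z)) ↔
      ¬ ∀ g h : G, g * h = h * g) := by
  refine ⟨⟨fun a b => (cheinMul_left_bijective a).existsUnique b,
    fun a b => (cheinMul_right_bijective a).existsUnique b,
    fun p => ⟨one_cheinMul p, cheinMul_one p⟩, cheinMul_moufang⟩,
    fun p hp => ⟨cheinMul_self_of_snd_eq_one hp, fun h => by simp [h] at hp⟩,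
    not_congr cheinMul_assoc_iff⟩

theorem stmt17 {G : Type*} [Group G] [Finite G] :
    ((∀ a b : G × ZMod 2, ∃! z, cheinMul a z = b) ∧
      (∀ a b : G × ZMod 2, ∃! z, cheinMul z a = b) ∧
      (∀ p : G × ZMod 2, cheinMul (1, 0) p = p ∧ cheinMul p (1, 0) = p) ∧
      (∀ x y z : G × ZMod 2,
        cheinMul (cheinMul (cheinMul x y) x) z =
          cheinMul x (cheinMul y (cheinMul x z)))) ∧
    (∀ p : G × ZMod 2, p.2 = 1 → cheinMul p p = (1, 0) ∧ p ≠ (1, 0)) ∧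
    ((¬ ∀ x y z : G × ZMod 2,
        cheinMul (cheinMul x y) z = cheinMul x (cheinMul y z)) ↔
      ¬ ∀ g h : G, g * h = h * g) :=
  stmt17_general
end
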